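/- arXiv:1903.10721 — 5 statements merged into one kernel-verified Lean document; each statement's English description precedes it below -/
import Mathlib

section
/- For two Jacobi matrices g = g(M,λ,μ,κ) and g' = g(M',λ',μ',κ') with M = [[a,b],[c,d]], M' = [[a',b'],[c',d']] of determinant 1, the matrix product g·g' equals the Jacobi matrix g(M₁,λ₁,μ₁,κ₁) where M₁ = M·M', (λ₁,μ₁) = (λ,μ)·M' + (λ',μ') = (λ' + λa' + μc', μ' + λb' + μd'), and κ₁ = κ + κ' + (λa' + μc')μ' − (λb' + μd')λ'. Moreover the matrix inverse of g(M,λ,μ,κ) is the Jacobi matrix g(M⁻¹, −(λd−μc), −(−λb+μa), −κ). -/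
open Matrix

/-- The Jacobi matrix `g(M,λ,μ,κ)`, `M = [[a,b],[c,d]]`: rows `(a,0,b,q)`,
`(λ,1,μ,κ)`, `(c,0,d,−p)`, `(0,0,0,1)` with `p = λd − μc`, `q = −λb + μa`. -/
noncomputable def jacobiMat (a b c d l m k : ℝ) : Matrix (Fin 4) (Fin 4) ℝ :=
  !![a, 0, b, -l * b + m * a;
     l, 1, m, k;
     c, 0, d, -(l * d - m * c);
     0, 0, 0, 1]

/-- Product and inverse formulas for Jacobi matrices: `g(M,λ,μ,κ)·g(M',λ',μ',κ') =
g(MM', (λ,μ)M' + (λ',μ'), κ + κ' + (λa'+μc')μ' − (λb'+μd')λ')`, and the inverse of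
`g(M,λ,μ,κ)` is `g(M⁻¹, −(λd−μc), −(−λb+μa), −κ)`. -/
theorem jacobiMat_mul_and_inv (a b c d a' b' c' d' l m k l' m' k' : ℝ)
    (h : a * d - b * c = 1) (h' : a' * d' - b' * c' = 1) :
    jacobiMat a b c d l m k * jacobiMat a' b' c' d' l' m' k' =
      jacobiMat (a * a' + b * c') (a * b' + b * d') (c * a' + d * c') (c * b' + d * d')
        (l' + l * a' + m * c') (m' + l * b' + m * d')
        (k + k' + (l * a' + m * c') * m' - (l * b' + m * d') * l') ∧
    jacobiMat a b c d l m k *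
        jacobiMat d (-b) (-c) a (-(l * d - m * c)) (-(-l * b + m * a)) (-k) = 1 ∧
    jacobiMat d (-b) (-c) a (-(l * d - m * c)) (-(-l * b + m * a)) (-k) *
        jacobiMat a b c d l m k = 1 := by
  refine ⟨?_, ?_, ?_⟩ <;>
    · ext i j
      fin_cases i <;> fin_cases j <;>
        simp [jacobiMat, Matrix.mul_apply, Fin.sum_univ_four, Matrix.one_apply,
          Matrix.vecHead, Matrix.vecTail, -mul_eq_zero] <;>
        first
          | ring1
          | linear_combination h
          | linear_combination -h
          | linear_combination l * h
          | linear_combination -l * h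
          | linear_combination m * h
          | linear_combination -m * h
          | linear_combination k * h
          | linear_combination -k * h
          | linear_combination (m * a - l * b) * h
          | linear_combination (l * b - m * a) * h
          | linear_combination (m * c - l * d) * h
          | linear_combination (l * d - m * c) * h
          | linear_combination (m * a - l * b) * h'
          | linear_combination (l * b - m * a) * h'
          | linear_combination (m * c - l * d) * h'
          | linear_combination (l * d - m * c) * h'
end

section
/- Let α, β > 0 and M = [[a,b],[c,d]] ∈ SL(2,ℝ). Fix (x',y',θ') with y' > 0, set Λ = (cx'+d)² + (cy')², x₁ = ((ax'+b)(cx'+d)+acy'²)/Λ, y₁ = y'/Λ. For every tangent vector (u,v,w) ∈ ℝ³ define u₁ = (y₁/(y'Λ))·[((cx'+d)²−(cy')²)u + 2cy'(cx'+d)v], v₁ = (y₁/(y'Λ))·[−2cy'(cx'+d)u + ((cx'+d)²−(cy')²)v], w₁ = w + c·(cy'·u − (cx'+d)·v)/Λ (these are the differentials of x₁, y₁, θ₁ under the SL(2,ℝ) action in Iwasawa coordinates). Then α(u₁² + v₁²)/y₁² + β(u₁/y₁ + 2w₁)² = α(u² + v²)/y'² + β(u/y' + 2w)². That is, the metric ds²_{SL(2,ℝ)}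 = α(dx²+dy²)/y² + β(dx/y + 2dθ)² on {(x,y,θ) : y > 0} is invariant under the SL(2,ℝ) action. -/
/-!
In the coordinate `z = x + iy` the action is the Möbius map `z ↦ (az + b)/(cz + d)`, whose
derivative `(cz + d)⁻²` is a rotation-scaling of `ℂ`; with `cz + d = p + iq` and `Λ = p² + q²`
the differential `(u₁, v₁)` is `(u, v)` multiplied by `(p - iq)²/Λ²`. Its modulus `1/Λ` is exactly
the factor by which `y` shrinks, so the hyperbolic term `(dx² + dy²)/y²` is preserved. In the fiber
term the rotation part of `dx₁/y₁` is cancelled by the change `2 dθ₁ - 2 dθ` of the angle, leaving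
`dx/y + 2dθ` unchanged.
-/

lemma sq_add_sq_pos_of_det_eq_one {a b c d x y : ℝ} (h : a * d - b * c = 1) (hy : 0 < y) :
    0 < (c * x + d) ^ 2 + (c * y) ^ 2 := by
  rcases eq_or_ne c 0 with rfl | hc
  · have hd : d ≠ 0 := by rintro rfl; simp at h
    simpa using sq_pos_of_ne_zero hd
  · have : 0 < (c * y) ^ 2 := by positivity
    positivity

section IwasawaDifferential

variable {c p y u v w Λ : ℝ}

lemma rotation_sq_add_sq (c p y u v : ℝ) :
    ((p ^ 2 - (c * y) ^ 2) * u + 2 * c * y * p * v) ^ 2 +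
      (-(2 * c * y * p) * u + (p ^ 2 - (c * y) ^ 2) * v) ^ 2 =
      (p ^ 2 + (c * y) ^ 2) ^ 2 * (u ^ 2 + v ^ 2) := by
  ring

lemma hyperbolic_term_invariant (hy : y ≠ 0) (hΛ : p ^ 2 + (c * y) ^ 2 = Λ) (hΛ0 : Λ ≠ 0) :
    ((y / Λ / (y * Λ) * ((p ^ 2 - (c * y) ^ 2) * u + 2 * c * y * p * v)) ^ 2 +
        (y / Λ / (y * Λ) * (-(2 * c * y * p) * u + (p ^ 2 - (c * y) ^ 2) * v)) ^ 2) /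
        (y / Λ) ^ 2 =
      (u ^ 2 + v ^ 2) / y ^ 2 := by
  calc _ = (y / Λ / (y * Λ)) ^ 2 / (y / Λ) ^ 2 *
          (((p ^ 2 - (c * y) ^ 2) * u + 2 * c * y * p * v) ^ 2 +
            (-(2 * c * y * p) * u + (p ^ 2 - (c * y) ^ 2) * v) ^ 2) := by ring
    _ = (u ^ 2 + v ^ 2) / y ^ 2 := by
      rw [rotation_sq_add_sq, hΛ]
      field_simp

lemma fiber_term_invariant (hy : y ≠ 0) (hΛ : p ^ 2 + (c * y) ^ 2 = Λ) (hΛ0 : Λ ≠ 0) :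
    y / Λ / (y * Λ) * ((p ^ 2 - (c * y) ^ 2) * u + 2 * c * y * p * v) / (y / Λ) +
        2 * (w + c * (c * y * u - p * v) / Λ) =
      u / y + 2 * w := by
  have cancel : (p ^ 2 - (c * y) ^ 2) * u + 2 * c * y * p * v + 2 * (c * y) * (c * y * u - p * v) =
      Λ * u := by
    rw [← hΛ]; ring
  field_simp
  linear_combination cancel

end IwasawaDifferential

theorem sl2_metric_invariant_general (α β a b c d x' y' u v w : ℝ)
    (h : a * d - b * c = 1) (hy : 0 < y') :
    let Λ := (c * x' + d) ^ 2 + (c * y') ^ 2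
    let y₁ := y' / Λ
    let u₁ := y₁ / (y' * Λ) *
      (((c * x' + d) ^ 2 - (c * y') ^ 2) * u + 2 * c * y' * (c * x' + d) * v)
    let v₁ := y₁ / (y' * Λ) *
      (-(2 * c * y' * (c * x' + d)) * u + ((c * x' + d) ^ 2 - (c * y') ^ 2) * v)
    let w₁ := w + c * (c * y' * u - (c * x' + d) * v) / Λ
    α * (u₁ ^ 2 + v₁ ^ 2) / y₁ ^ 2 + β * (u₁ / y₁ + 2 * w₁) ^ 2 =
      α * (u ^ 2 + v ^ 2) / y' ^ 2 + β * (u / y' + 2 * w) ^ 2 := by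
  intro Λ y₁ u₁ v₁ w₁
  have hΛ : Λ ≠ 0 := (sq_add_sq_pos_of_det_eq_one h hy).ne'
  have hyperbolic : (u₁ ^ 2 + v₁ ^ 2) / y₁ ^ 2 = (u ^ 2 + v ^ 2) / y' ^ 2 :=
    hyperbolic_term_invariant hy.ne' rfl hΛ
  have fiber : u₁ / y₁ + 2 * w₁ = u / y' + 2 * w := fiber_term_invariant hy.ne' rfl hΛ
  rw [fiber, mul_div_assoc, hyperbolic, ← mul_div_assoc]

/-- Invariance of the two-parameter metric
`ds² = α(dx²+dy²)/y² + β(dx/y + 2dθ)²` on `SL(2,ℝ) ≅ {(x,y,θ) : y > 0}`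
under the left `SL(2,ℝ)` action: with `Λ = (cx'+d)² + (cy')²`,
`x₁ = ((ax'+b)(cx'+d)+acy'²)/Λ`, `y₁ = y'/Λ` and the differentials
`(u₁,v₁,w₁)` of `(x₁,y₁,θ₁)` applied to a tangent vector `(u,v,w)`,
the metric is preserved. -/
theorem sl2_metric_invariant (α β a b c d x' y' θ' u v w : ℝ)
    (hα : 0 < α) (hβ : 0 < β) (h : a * d - b * c = 1) (hy : 0 < y') :
    let Λ := (c * x' + d) ^ 2 + (c * y') ^ 2
    let y₁ := y' / Λ
    let u₁ := y₁ / (y' * Λ) *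
      (((c * x' + d) ^ 2 - (c * y') ^ 2) * u + 2 * c * y' * (c * x' + d) * v)
    let v₁ := y₁ / (y' * Λ) *
      (-(2 * c * y' * (c * x' + d)) * u + ((c * x' + d) ^ 2 - (c * y') ^ 2) * v)
    let w₁ := w + c * (c * y' * u - (c * x' + d) * v) / Λ
    α * (u₁ ^ 2 + v₁ ^ 2) / y₁ ^ 2 + β * (u₁ / y₁ + 2 * w₁) ^ 2 =
      α * (u ^ 2 + v ^ 2) / y' ^ 2 + β * (u / y' + 2 * w) ^ 2 :=
  sl2_metric_invariant_general α β a b c d x' y' u v w h hy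
end

section
/- Let α, γ > 0 and let G(x,y,p,q) be the 4×4 symmetric matrix with entries g_xx = g_yy = α/y², g_pp = γ(x²+y²)/y, g_qq = γ/y, g_pq = g_qp = γx/y, and all other entries zero (the balanced metric on the Siegel–Jacobi upper half-plane X₁^J). For (a,b,c,d) with ad − bc = 1 and (λ,μ) ∈ ℝ², define Φ : {(x,y,p,q) : y > 0} → ℝ⁴ by Φ(x,y,p,q) = (x₁,y₁,p₁,q₁) with Λ = (cx+d)² + (cy)², x₁ = ((ax+b)(cx+d)+acy²)/Λ, y₁ = y/Λ, p₁ = (λd − μc) + dp − cq, q₁ = (−λb + μa) − bp + aq. Then y₁ > 0 and for every P with y > 0: (DΦ(P))ᵀ · G(Φ(P)) · DΦ(P) = G(P), where DΦ(P) is the Jacobian matrix of Φ at P. That is, the balanced metric ds² = α(dx²+dy²)/y² + (γ/y)[(x²+y²)dp² + dq² + 2x dp dq] is invariant under the action of the reduced Jacobi group G^J(ℝ)₀. -/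
open Matrix

/-- The Jacobian matrix of a map `Φ : ℝⁿ → ℝⁿ` at a point `P`. -/
noncomputable def jacobianMat {n : ℕ} (Φ : (Fin n → ℝ) → (Fin n → ℝ)) (P : Fin n → ℝ) :
    Matrix (Fin n) (Fin n) ℝ :=
  fun i j => fderiv ℝ (fun Q => Φ Q i) P (Pi.single j 1)

/-- The matrix of the balanced metric
`ds² = α(dx²+dy²)/y² + (γ/y)[(x²+y²)dp² + dq² + 2x dp dq]` on the Siegel–Jacobi
upper half-plane, in coordinates `P = (x,y,p,q)`. -/
noncomputable def balG (α γ : ℝ) (P : Fin 4 → ℝ) : Matrix (Fin 4) (Fin 4) ℝ :=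
  !![α / (P 1) ^ 2, 0, 0, 0;
     0, α / (P 1) ^ 2, 0, 0;
     0, 0, γ * ((P 0) ^ 2 + (P 1) ^ 2) / (P 1), γ * (P 0) / (P 1);
     0, 0, γ * (P 0) / (P 1), γ / (P 1)]

/-- The action of the element `(M,(λ,μ))` of the reduced Jacobi group `G^J(ℝ)₀`,
`M = [[a,b],[c,d]]`, on the Siegel–Jacobi upper half-plane in coordinates
`(x,y,p,q)`. -/
noncomputable def jPhi (a b c d l m : ℝ) (P : Fin 4 → ℝ) : Fin 4 → ℝ :=
  ![((a * P 0 + b) * (c * P 0 + d) + a * c * (P 1) ^ 2) /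
      ((c * P 0 + d) ^ 2 + (c * P 1) ^ 2),
    P 1 / ((c * P 0 + d) ^ 2 + (c * P 1) ^ 2),
    (l * d - m * c) + d * P 2 - c * P 3,
    (-(l * b) + m * a) - b * P 2 + a * P 3]


/-!
Write `τ = x + iy`. The first two coordinates of `Φ` are those of the Möbius image
`τ₁ = (aτ + b)/(cτ + d)`, a holomorphic map with derivative `w = (cτ + d)⁻²`, while
`(p, q) ↦ (p₁, q₁)` is affine with linear part `(M⁻¹)ᵀ`. Hence `DΦ` is block diagonal.
Since `|w| = |cτ + d|⁻² = y₁/y`, the first block preserves `α |dτ|² / y²`. The second part of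
the metric is `(γ/y) |τ dp + dq|²`, and `(dτ₁ - b, a - cτ₁) = (τ, 1)/(cτ + d)`, so
`τ₁ dp₁ + dq₁ = (τ dp + dq)/(cτ + d)`, which again rescales by `|cτ + d|⁻² = y₁/y`.
-/

open Complex

noncomputable def tauCLM : (Fin 4 → ℝ) →L[ℝ] ℂ :=
  (ContinuousLinearMap.proj 0).smulRight (1 : ℂ) + (ContinuousLinearMap.proj 1).smulRight I

@[simp] lemma tauCLM_re (P : Fin 4 → ℝ) : (tauCLM P).re = P 0 := by simp [tauCLM]

@[simp] lemma tauCLM_im (P : Fin 4 → ℝ) : (tauCLM P).im = P 1 := by simp [tauCLM]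

noncomputable def mobius (a b c d : ℝ) (τ : ℂ) : ℂ := (a * τ + b) / (c * τ + d)

section Mobius

variable {a b c d : ℝ}

lemma mobius_denom_ne_zero (h : a * d - b * c = 1) {τ : ℂ} (hτ : τ.im ≠ 0) :
    (c : ℂ) * τ + d ≠ 0 := by
  intro h0
  have hre := congrArg re h0
  have him := congrArg im h0
  simp only [add_re, mul_re, ofReal_re, ofReal_im, zero_mul, sub_zero, zero_re, add_im, mul_im,
    add_zero, zero_im, mul_eq_zero] at hre him
  rcases him with rfl | h1
  · simp only [zero_mul, zero_add] at hre
    simp [hre] at h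
  · exact hτ h1

lemma hasDerivAt_mobius (h : a * d - b * c = 1) {τ : ℂ} (hτ : (c : ℂ) * τ + d ≠ 0) :
    HasDerivAt (mobius a b c d) (((c : ℂ) * τ + d) ^ 2)⁻¹ τ := by
  have hnum : HasDerivAt (fun z : ℂ => a * z + b) a τ := by
    simpa using ((hasDerivAt_id τ).const_mul (a : ℂ)).add_const (b : ℂ)
  have hden : HasDerivAt (fun z : ℂ => c * z + d) c τ := by
    simpa using ((hasDerivAt_id τ).const_mul (c : ℂ)).add_const (d : ℂ)
  refine (hnum.fun_div hden hτ).congr_deriv ?_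
  have h' : (a : ℂ) * d - b * c = 1 := by exact_mod_cast h
  field_simp
  linear_combination h'

lemma mobius_im (h : a * d - b * c = 1) (τ : ℂ) :
    (mobius a b c d τ).im = τ.im / normSq (c * τ + d) := by
  rw [mobius, div_im, ← sub_div]
  congr 1
  simp only [add_re, add_im, mul_re, mul_im, ofReal_re, ofReal_im, zero_mul, sub_zero, add_zero]
  linear_combination τ.im * h

lemma sub_mul_mobius (h : a * d - b * c = 1) {τ : ℂ} (hτ : (c : ℂ) * τ + d ≠ 0) :
    a - c * mobius a b c d τ = ((c : ℂ) * τ + d)⁻¹ := by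
  have h' : (a : ℂ) * d - b * c = 1 := by exact_mod_cast h
  rw [mobius]
  field_simp
  linear_combination h'

lemma mul_mobius_sub (h : a * d - b * c = 1) {τ : ℂ} (hτ : (c : ℂ) * τ + d ≠ 0) :
    d * mobius a b c d τ - b = τ * ((c : ℂ) * τ + d)⁻¹ := by
  have h' : (a : ℂ) * d - b * c = 1 := by exact_mod_cast h
  rw [mobius, mul_div_assoc', div_sub' hτ, div_eq_mul_inv]
  congr 1
  linear_combination τ * h'

end Mobius

section JacobiAction

variable {a b c d : ℝ}

lemma jPhi_zero (l m : ℝ) (P : Fin 4 → ℝ) :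
    jPhi a b c d l m P 0 = (mobius a b c d (tauCLM P)).re := by
  simp only [jPhi, mobius, div_re, normSq_apply, add_re, add_im, mul_re, mul_im, ofReal_re, ofReal_im,
    tauCLM_re, tauCLM_im, cons_val_zero, Fin.isValue, zero_mul, sub_zero, add_zero]
  ring

lemma jPhi_one (h : a * d - b * c = 1) (l m : ℝ) (P : Fin 4 → ℝ) :
    jPhi a b c d l m P 1 = (mobius a b c d (tauCLM P)).im := by
  rw [mobius_im h]
  simp only [jPhi, normSq_apply, add_re, add_im, mul_re, mul_im, ofReal_re, ofReal_im, tauCLM_re,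
    tauCLM_im, cons_val_zero, cons_val_one, Fin.isValue, zero_mul, sub_zero, add_zero]
  ring

lemma tauCLM_jPhi (h : a * d - b * c = 1) (l m : ℝ) (P : Fin 4 → ℝ) :
    tauCLM (jPhi a b c d l m P) = mobius a b c d (tauCLM P) := by
  apply Complex.ext
  · simp [jPhi_zero]
  · simp [jPhi_one h]

end JacobiAction

lemma jacobianMat_apply_of_hasFDerivAt {n : ℕ} {Φ : (Fin n → ℝ) → Fin n → ℝ} {P : Fin n → ℝ}
    {i : Fin n} {f' : (Fin n → ℝ) →L[ℝ] ℝ} (hf : HasFDerivAt (fun Q => Φ Q i) f' P) (j : Fin n) :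
    jacobianMat Φ P i j = f' (Pi.single j 1) := by
  rw [jacobianMat, hf.fderiv]

/-- Multiplication by `w` on the `(x, y)`-plane, written as a real matrix, and `(M⁻¹)ᵀ` on
the `(p, q)`-plane. -/
def jacobiDerivMatrix (w : ℂ) (a b c d : ℝ) : Matrix (Fin 4) (Fin 4) ℝ :=
  !![w.re, -w.im, 0, 0;
     w.im, w.re, 0, 0;
     0, 0, d, -c;
     0, 0, -b, a]

section JacobiDerivative

variable {a b c d : ℝ}

lemma hasFDerivAt_mobius_tauCLM (h : a * d - b * c = 1) {P : Fin 4 → ℝ} (hP : P 1 ≠ 0) :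
    HasFDerivAt (fun Q => mobius a b c d (tauCLM Q))
      (((((c : ℂ) * tauCLM P + d) ^ 2)⁻¹ • (1 : ℂ →L[ℝ] ℂ)).comp tauCLM) P :=
  (hasDerivAt_mobius h (mobius_denom_ne_zero h (by simpa using hP))).complexToReal_fderiv.comp P
    tauCLM.hasFDerivAt

local notation "proj" => ContinuousLinearMap.proj (R := ℝ) (φ := fun _ : Fin 4 => ℝ)

theorem jacobianMat_jPhi (h : a * d - b * c = 1) (l m : ℝ) {P : Fin 4 → ℝ} (hP : P 1 ≠ 0) :
    jacobianMat (jPhi a b c d l m) P =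
      jacobiDerivMatrix (((c : ℂ) * tauCLM P + d) ^ 2)⁻¹ a b c d := by
  set w : ℂ := (((c : ℂ) * tauCLM P + d) ^ 2)⁻¹
  have dx : HasFDerivAt (fun Q => jPhi a b c d l m Q 0)
      (reCLM.comp ((w • (1 : ℂ →L[ℝ] ℂ)).comp tauCLM)) P := by
    simp only [jPhi_zero]
    exact reCLM.hasFDerivAt.comp P (hasFDerivAt_mobius_tauCLM h hP)
  have dy : HasFDerivAt (fun Q => jPhi a b c d l m Q 1)
      (imCLM.comp ((w • (1 : ℂ →L[ℝ] ℂ)).comp tauCLM)) P := by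
    simp only [jPhi_one h]
    exact imCLM.hasFDerivAt.comp P (hasFDerivAt_mobius_tauCLM h hP)
  have dp : HasFDerivAt (fun Q => jPhi a b c d l m Q 2) (d • proj 2 - c • proj 3) P := by
    have hΦ : (fun Q => jPhi a b c d l m Q 2) =
        fun Q => (l * d - m * c) + (d • proj 2 - c • proj 3) Q := by
      funext Q
      simp only [jPhi, cons_val, Fin.isValue, _root_.sub_apply, _root_.smul_apply,
        ContinuousLinearMap.proj_apply, smul_eq_mul]
      ring
    rw [hΦ]
    exact (ContinuousLinearMap.hasFDerivAt _).const_add _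
  have dq : HasFDerivAt (fun Q => jPhi a b c d l m Q 3) (a • proj 3 - b • proj 2) P := by
    have hΦ : (fun Q => jPhi a b c d l m Q 3) =
        fun Q => (-(l * b) + m * a) + (a • proj 3 - b • proj 2) Q := by
      funext Q
      simp only [jPhi, cons_val, Fin.isValue, _root_.sub_apply, _root_.smul_apply,
        ContinuousLinearMap.proj_apply, smul_eq_mul]
      ring
    rw [hΦ]
    exact (ContinuousLinearMap.hasFDerivAt _).const_add _
  ext i j
  fin_cases i <;> fin_cases j <;>
    simp [jacobianMat_apply_of_hasFDerivAt dx, jacobianMat_apply_of_hasFDerivAt dy,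
      jacobianMat_apply_of_hasFDerivAt dp, jacobianMat_apply_of_hasFDerivAt dq, jacobiDerivMatrix]

end JacobiDerivative

theorem jacobiDerivMatrix_transpose_mul_balG_mul (α γ a b c d : ℝ) (w : ℂ) {P P₁ : Fin 4 → ℝ}
    (hy : P 1 ≠ 0) (hy₁ : P₁ 1 ≠ 0) (hw : normSq w = (P₁ 1 / P 1) ^ 2)
    (hlin : d * tauCLM P₁ - b = tauCLM P * (a - c * tauCLM P₁))
    (hs : normSq (a - c * tauCLM P₁) = P₁ 1 / P 1) :
    (jacobiDerivMatrix w a b c d)ᵀ * balG α γ P₁ * jacobiDerivMatrix w a b c d = balG α γ P := by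
  have hre : d * P₁ 0 - b = P 0 * (a - c * P₁ 0) + P 1 * (c * P₁ 1) := by
    simpa using congrArg re hlin
  have him : d * P₁ 1 = -(P 0 * (c * P₁ 1)) + P 1 * (a - c * P₁ 0) := by
    simpa using congrArg im hlin
  have hs' : ((a - c * P₁ 0) ^ 2 + (c * P₁ 1) ^ 2) * P 1 = P₁ 1 := by
    simp only [normSq_apply, sub_re, sub_im, mul_re, mul_im, ofReal_re, ofReal_im, tauCLM_re,
      tauCLM_im, Fin.isValue, zero_mul, sub_zero, add_zero, zero_sub, mul_neg, neg_mul, neg_neg] at hs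
    field_simp at hs
    linear_combination hs
  have hw' : (w.re ^ 2 + w.im ^ 2) * P 1 ^ 2 = P₁ 1 ^ 2 := by
    rw [normSq_apply] at hw
    field_simp at hw
    linear_combination hw
  -- The `(p, q)`-entries are `γ/y₁` times `|dτ₁ - b|²`, `Re((dτ₁ - b)(a - cτ₁)‾)` and
  -- `|a - cτ₁|²`, which `hre`, `him` and `hs'` turn into those of `balG α γ P`.
  ext i j
  fin_cases i <;> fin_cases j <;>
    simp only [Matrix.mul_apply, transpose_apply, Fin.sum_univ_four, balG, jacobiDerivMatrix, of_apply,
      cons_val', cons_val_zero, cons_val_one, cons_val, cons_val_fin_one, Fin.isValue, Fin.zero_eta,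
      Fin.mk_one, Fin.reduceFinMk] <;> field_simp <;> grind

theorem balanced_metric_invariant_general (α γ a b c d l m : ℝ)
    (h : a * d - b * c = 1) :
    ∀ P : Fin 4 → ℝ, 0 < P 1 →
      0 < jPhi a b c d l m P 1 ∧
      (jacobianMat (jPhi a b c d l m) P)ᵀ * balG α γ (jPhi a b c d l m P) *
          jacobianMat (jPhi a b c d l m) P = balG α γ P := by
  intro P hP
  have hτ : (c : ℂ) * tauCLM P + d ≠ 0 := mobius_denom_ne_zero h (by simpa using hP.ne')
  have hΛ : 0 < normSq ((c : ℂ) * tauCLM P + d) := normSq_pos.2 hτ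
  have hy₁ : jPhi a b c d l m P 1 = P 1 / normSq ((c : ℂ) * tauCLM P + d) := by
    rw [jPhi_one h, mobius_im h, tauCLM_im]
  refine ⟨hy₁ ▸ div_pos hP hΛ, ?_⟩
  rw [jacobianMat_jPhi h l m hP.ne']
  apply jacobiDerivMatrix_transpose_mul_balG_mul α γ a b c d _ hP.ne' (hy₁ ▸ (div_pos hP hΛ).ne')
  · rw [hy₁, map_inv₀, map_pow]
    field_simp
  · rw [tauCLM_jPhi h, mul_mobius_sub h hτ, sub_mul_mobius h hτ]
  · rw [tauCLM_jPhi h, sub_mul_mobius h hτ, map_inv₀, hy₁]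
    field_simp

/-- The balanced metric on the Siegel–Jacobi upper half-plane `X₁^J` is invariant
under the action of the reduced Jacobi group `G^J(ℝ)₀`: for every point `P` with
`y > 0` the image point has `y₁ > 0` and `(DΦ(P))ᵀ · G(Φ(P)) · DΦ(P) = G(P)`. -/
theorem balanced_metric_invariant (α γ a b c d l m : ℝ)
    (hα : 0 < α) (hγ : 0 < γ) (h : a * d - b * c = 1) :
    ∀ P : Fin 4 → ℝ, 0 < P 1 →
      0 < jPhi a b c d l m P 1 ∧
      (jacobianMat (jPhi a b c d l m) P)ᵀ * balG α γ (jPhi a b c d l m P) *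
          jacobianMat (jPhi a b c d l m) P = balG α γ P :=
  balanced_metric_invariant_general α γ a b c d l m h
end

section
/- Let α, β, γ, δ > 0 and let G(x,y,θ,p,q,κ) be the 6×6 symmetric matrix of the left-invariant metric ds²_{G^J₁(ℝ)} = α(dx²+dy²)/y² + β(dx/y + 2dθ)² + (γ/y)[dq² + (x²+y²)dp² + 2x dp dq] + δ(dκ − p dq + q dp)² on {(x,y,θ,p,q,κ) ∈ ℝ⁶ : y > 0}. Define the six vector fields L¹ = (1/√α)(y cos 2θ, y sin 2θ, −(1/2)cos 2θ, 0, 0, 0), L² = (1/√α)(−y sin 2θ, y cos 2θ, (1/2)sin 2θ, 0, 0, 0), L³ = (0,0,1/(2√β),0,0,0), L⁴ = (1/(√γ·√y))·(0, 0, 0, cos θ, −(x cos θ + y sin θ), −[p(x cos θ + y sin θ) + q cos θ]), L⁵ = (1/(√γ·√y))·(0, 0, 0, sin θ, y cos θ − x sin θ, p(y cos θ − x sin θ) − q sin θ), L⁶ = (0,0,0,0,0,1/√δ). Then for all points with y > 0 and all i,j ∈ {1,…,6}: (Lⁱ)ᵀ · G · Lʲ = δ_{ij}, i.e. L¹,…,L⁶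 form an orthonormal frame for the left-invariant metric on the real Jacobi group G^J₁(ℝ) in the S-coordinates (x,y,θ,p,q,κ). -/
open Matrix

/-- The matrix of the four-parameter left-invariant metric
`ds² = α(dx²+dy²)/y² + β(dx/y+2dθ)² + (γ/y)[dq² + (x²+y²)dp² + 2x dp dq]
+ δ(dκ − p dq + q dp)²` on the real Jacobi group `G^J₁(ℝ)` in the S-coordinates
`(x,y,θ,p,q,κ)`. -/
noncomputable def gJ (α β γ δ x y p q : ℝ) : Matrix (Fin 6) (Fin 6) ℝ :=
  !![(α + β) / y ^ 2, 0, 2 * β / y, 0, 0, 0;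
     0, α / y ^ 2, 0, 0, 0, 0;
     2 * β / y, 0, 4 * β, 0, 0, 0;
     0, 0, 0, γ * (x ^ 2 + y ^ 2) / y + δ * q ^ 2,
       γ * x / y - δ * p * q, δ * q;
     0, 0, 0, γ * x / y - δ * p * q, γ / y + δ * p ^ 2, -(δ * p);
     0, 0, 0, δ * q, -(δ * p), δ]

/-- The left-invariant frame `L¹,…,L⁶` on `G^J₁(ℝ)` in the S-coordinates
`(x,y,θ,p,q,κ)`. -/
noncomputable def LframeJ (α β γ δ x y θ p q : ℝ) : Fin 6 → Fin 6 → ℝ :=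
  ![![y * Real.cos (2 * θ) / Real.sqrt α, y * Real.sin (2 * θ) / Real.sqrt α,
      -(1 / 2) * Real.cos (2 * θ) / Real.sqrt α, 0, 0, 0],
    ![-(y * Real.sin (2 * θ)) / Real.sqrt α, y * Real.cos (2 * θ) / Real.sqrt α,
      (1 / 2) * Real.sin (2 * θ) / Real.sqrt α, 0, 0, 0],
    ![0, 0, 1 / (2 * Real.sqrt β), 0, 0, 0],
    ![0, 0, 0, Real.cos θ / (Real.sqrt γ * Real.sqrt y),
      -(x * Real.cos θ + y * Real.sin θ) / (Real.sqrt γ * Real.sqrt y),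
      -(p * (x * Real.cos θ + y * Real.sin θ) + q * Real.cos θ) /
        (Real.sqrt γ * Real.sqrt y)],
    ![0, 0, 0, Real.sin θ / (Real.sqrt γ * Real.sqrt y),
      (y * Real.cos θ - x * Real.sin θ) / (Real.sqrt γ * Real.sqrt y),
      (p * (y * Real.cos θ - x * Real.sin θ) - q * Real.sin θ) /
        (Real.sqrt γ * Real.sqrt y)],
    ![0, 0, 0, 0, 0, 1 / Real.sqrt δ]]


/-!
Completing the squares, `(γ/y)[dq² + (x²+y²)dp² + 2x dp dq] = (γ/y)(dq + x dp)² + γy dp²`, writes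
the metric as `Σₖ ωₖ²` for the six 1-forms `√α dx/y`, `√α dy/y`, `√β (dx/y + 2dθ)`,
`√(γ/y) (dq + x dp)`, `√(γy) dp`, `√δ (dκ − p dq + q dp)`. Hence `G = Cᵀ C` for the coframe matrix
`C` with these rows, and `(Lⁱ)ᵀ G Lʲ = (C Lⁱ) ⬝ (C Lʲ)`. The vectors `C Lⁱ` are the rows of the
orthogonal matrix built from the rotation by `2θ` on the first two coordinates and a reflected
rotation by `θ` on the fourth and fifth, so they are orthonormal.
-/

open Real

theorem dotProduct_transpose_mul_self_mulVec {m n R : Type*} [Fintype m] [Fintype n]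
    [CommSemiring R] (C : Matrix m n R) (u v : n → R) :
    u ⬝ᵥ (Cᵀ * C) *ᵥ v = C *ᵥ u ⬝ᵥ C *ᵥ v := by
  rw [← mulVec_mulVec, dotProduct_transpose_mulVec, dotProduct_comm]

noncomputable def coframeJ (α β γ δ x y p q : ℝ) : Matrix (Fin 6) (Fin 6) ℝ :=
  !![√α / y, 0, 0, 0, 0, 0;
     0, √α / y, 0, 0, 0, 0;
     √β / y, 0, 2 * √β, 0, 0, 0;
     0, 0, 0, √γ * x / √y, √γ / √y, 0;
     0, 0, 0, √γ * √y, 0, 0;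
     0, 0, 0, √δ * q, -(√δ * p), √δ]

noncomputable def rotationFrame (θ : ℝ) : Fin 6 → Fin 6 → ℝ :=
  ![![cos (2 * θ), sin (2 * θ), 0, 0, 0, 0],
    ![-sin (2 * θ), cos (2 * θ), 0, 0, 0, 0],
    ![0, 0, 1, 0, 0, 0],
    ![0, 0, 0, -sin θ, cos θ, 0],
    ![0, 0, 0, cos θ, sin θ, 0],
    ![0, 0, 0, 0, 0, 1]]

theorem rotationFrame_dotProduct (θ : ℝ) (i j : Fin 6) :
    rotationFrame θ i ⬝ᵥ rotationFrame θ j = if i = j then 1 else 0 := by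
  fin_cases i <;> fin_cases j <;>
    simp [rotationFrame, dotProduct, Fin.sum_univ_six, ← sq, mul_comm]

theorem gJ_eq_transpose_mul_coframeJ {α β γ δ : ℝ} (hα : 0 ≤ α) (hβ : 0 ≤ β) (hγ : 0 ≤ γ)
    (hδ : 0 ≤ δ) (x : ℝ) {y : ℝ} (hy : 0 < y) (p q : ℝ) :
    gJ α β γ δ x y p q = (coframeJ α β γ δ x y p q)ᵀ * coframeJ α β γ δ x y p q := by
  obtain ⟨s, hs, rfl⟩ : ∃ s, 0 < s ∧ s ^ 2 = y := ⟨√y, sqrt_pos.2 hy, sq_sqrt hy.le⟩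
  ext i j
  fin_cases i <;> fin_cases j <;>
    simp only [gJ, coframeJ, mul_apply, transpose_apply, of_apply, Fin.sum_univ_six, cons_val',
      cons_val, cons_val_zero, cons_val_one, cons_val_fin_one, Fin.isValue, Fin.reduceFinMk,
      Fin.zero_eta, Fin.mk_one, sqrt_sq hs.le, mul_zero, zero_mul, add_zero, zero_add] <;>
    field_simp <;> (try simp only [sq_sqrt hα, sq_sqrt hβ, sq_sqrt hγ, sq_sqrt hδ]) <;> ring

theorem coframeJ_mulVec_LframeJ {α β γ δ : ℝ} (hα : 0 < α) (hβ : 0 < β) (hγ : 0 < γ)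
    (hδ : 0 < δ) (x : ℝ) {y : ℝ} (hy : 0 < y) (θ p q : ℝ) (i : Fin 6) :
    coframeJ α β γ δ x y p q *ᵥ LframeJ α β γ δ x y θ p q i = rotationFrame θ i := by
  obtain ⟨s, hs, rfl⟩ : ∃ s, 0 < s ∧ s ^ 2 = y := ⟨√y, sqrt_pos.2 hy, sq_sqrt hy.le⟩
  ext j
  fin_cases i <;> fin_cases j <;>
    simp only [coframeJ, LframeJ, rotationFrame, mulVec, dotProduct, of_apply, Fin.sum_univ_six,
      cons_val', cons_val, cons_val_zero, cons_val_one, cons_val_fin_one, Fin.isValue,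
      Fin.reduceFinMk, Fin.zero_eta, Fin.mk_one, sqrt_sq hs.le] <;> field_simp <;> ring

theorem LframeJ_orthonormal_general (α β γ δ : ℝ)
    (hα : 0 < α) (hβ : 0 < β) (hγ : 0 < γ) (hδ : 0 < δ)
    (x y θ p q : ℝ) (hy : 0 < y) :
    ∀ i j : Fin 6,
      LframeJ α β γ δ x y θ p q i ⬝ᵥ
          (gJ α β γ δ x y p q *ᵥ LframeJ α β γ δ x y θ p q j) =
        if i = j then 1 else 0 := by
  intro i j
  rw [gJ_eq_transpose_mul_coframeJ hα.le hβ.le hγ.le hδ.le x hy p q,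
    dotProduct_transpose_mul_self_mulVec, coframeJ_mulVec_LframeJ hα hβ hγ hδ x hy,
    coframeJ_mulVec_LframeJ hα hβ hγ hδ x hy, rotationFrame_dotProduct]

/-- The vector fields `L¹,…,L⁶` form an orthonormal frame for the four-parameter
left-invariant metric on the real Jacobi group `G^J₁(ℝ)` in the S-coordinates. -/
theorem LframeJ_orthonormal (α β γ δ : ℝ)
    (hα : 0 < α) (hβ : 0 < β) (hγ : 0 < γ) (hδ : 0 < δ)
    (x y θ p q κ : ℝ) (hy : 0 < y) :
    ∀ i j : Fin 6,
      LframeJ α β γ δ x y θ p q i ⬝ᵥ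
          (gJ α β γ δ x y p q *ᵥ LframeJ α β γ δ x y θ p q j) =
        if i = j then 1 else 0 :=
  LframeJ_orthonormal_general α β γ δ hα hβ hγ hδ x y θ p q hy
end

section
/- Let r > 0. A tuple (a,b,c,d,e) ∈ ℝ⁵ satisfies the system r·b·c + d·e = 0, −r·a·c + d² − e² = 0, b·d + e·(a+c) = 0, r·c·d + b·e − a·d = 0 if and only if it has one of the following forms: (i) (0,0,c,0,0) with c ∈ ℝ; (ii) (a,b,0,0,0) with a,b ∈ ℝ; (iii) (r·c, 0, c, ±r·c, 0) with c ∈ ℝ; (iv) (a, 0, −a, 0, ε·√r·a) with a ∈ ℝ, ε ∈ {−1,1}; (v) (ε₁ε₂·((1−r)/√r)·e, ε₁·e, −(ε₁ε₂/√r)·e, ε₂·√r·e, e) with e ∈ ℝ, ε₁, ε₂ ∈ {−1,1}. These tuples are exactly the components (a,b,c,d,e) (the coefficient f being arbitrary) of the geodesic vectors X = aL¹ + bL² + cL³ + dL⁴ + eL⁵ + fL⁶ of the Siegel–Jacobi upper half-plane, where r = √(α/β). -/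
/-!
Write `r = s²` and split on whether `d` and `e` vanish; three of the four cases are immediate.
When `d e ≠ 0`, the combination `e·(4th) + (a - r c)·(1st) + b·(2nd)` equals `b (d² - r² c²)`,
and `b ≠ 0` by the first equation, so `d = ±r c`. The first and third equations then give
`b = ∓e` and `a = (r - 1) c`, and the second reduces to `e² = r c²`, i.e. `e = ±s c`.
Family (v) is this `c`-parametrised family rewritten in terms of `e`.
-/

namespace SiegelJacobi

variable {K : Type*} [Field K]

def GeodesicSystem (r a b c d e : K) : Prop :=
  r * b * c + d * e = 0 ∧ -(r * a * c) + d ^ 2 - e ^ 2 = 0 ∧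
    b * d + e * (a + c) = 0 ∧ r * c * d + b * e - a * d = 0

theorem exists_sign_mul_of_sq_eq_sq {x y : K} (h : x ^ 2 = y ^ 2) :
    ∃ ε : K, (ε = 1 ∨ ε = -1) ∧ x = ε * y := by
  rcases sq_eq_sq_iff_eq_or_eq_neg.mp h with rfl | rfl
  · exact ⟨1, Or.inl rfl, (one_mul x).symm⟩
  · exact ⟨-1, Or.inr rfl, (neg_one_mul y).symm⟩

namespace GeodesicSystem

variable {r a b c d e : K}

theorem of_d_eq_zero_of_e_eq_zero (hr : r ≠ 0) (h : GeodesicSystem r a b c 0 0) :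
    (a = 0 ∧ b = 0) ∨ c = 0 := by
  obtain ⟨h₁, h₂, -, -⟩ := h
  refine (eq_or_ne c 0).symm.imp (fun hc ↦ ⟨?_, ?_⟩) id
  · simpa [hr, hc] using h₂
  · simpa [hr, hc] using h₁

theorem of_d_eq_zero (h : GeodesicSystem r a b c 0 e) (he : e ≠ 0) :
    b = 0 ∧ c = -a ∧ e ^ 2 = r * a ^ 2 := by
  obtain ⟨-, h₂, h₃, h₄⟩ := h
  have hb : b = 0 := by simpa [he] using h₄
  have hc : c = -a := by
    have : e * (a + c) = 0 := by linear_combination h₃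
    linear_combination (mul_eq_zero.mp this).resolve_left he
  exact ⟨hb, hc, by linear_combination -h₂ - r * a * hc⟩

theorem of_e_eq_zero (h : GeodesicSystem r a b c d 0) (hd : d ≠ 0) :
    b = 0 ∧ a = r * c ∧ (d = r * c ∨ d = -(r * c)) := by
  obtain ⟨-, h₂, h₃, h₄⟩ := h
  have hb : b = 0 := by simpa [hd] using h₃
  have ha : a = r * c := by
    have : d * (r * c - a) = 0 := by linear_combination h₄
    linear_combination -(mul_eq_zero.mp this).resolve_left hd
  refine ⟨hb, ha, sq_eq_sq_iff_eq_or_eq_neg.mp ?_⟩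
  linear_combination h₂ + r * c * ha

theorem of_d_ne_zero_of_e_ne_zero (hr : r ≠ 0) (h : GeodesicSystem r a b c d e) (hd : d ≠ 0)
    (he : e ≠ 0) : ∃ ε : K, (ε = 1 ∨ ε = -1) ∧
      a = (r - 1) * c ∧ b = -(ε * e) ∧ d = ε * (r * c) ∧ e ^ 2 = r * c ^ 2 := by
  obtain ⟨h₁, h₂, h₃, h₄⟩ := h
  have hb : b ≠ 0 := by
    rintro rfl
    exact mul_ne_zero hd he (by linear_combination h₁)
  have hd_sq : d ^ 2 = (r * c) ^ 2 := by
    have : b * (d ^ 2 - (r * c) ^ 2) = 0 := by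
      linear_combination e * h₄ + (a - r * c) * h₁ + b * h₂
    linear_combination (mul_eq_zero.mp this).resolve_left hb
  obtain ⟨ε, hε, rfl⟩ := exists_sign_mul_of_sq_eq_sq hd_sq
  have hε₂ : ε ^ 2 = 1 := sq_eq_one_iff.mpr hε
  have hc : c ≠ 0 := by rintro rfl; simp at hd
  have hb : b = -(ε * e) := by
    have : r * c * (b + ε * e) = 0 := by linear_combination h₁
    linear_combination (mul_eq_zero.mp this).resolve_left (mul_ne_zero hr hc)
  have ha : a = (r - 1) * c := by
    have : e * (a - (r - 1) * c) = 0 := by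
      linear_combination h₃ - ε * r * c * hb + e * r * c * hε₂
    linear_combination (mul_eq_zero.mp this).resolve_left he
  exact ⟨ε, hε, ha, hb, rfl, by linear_combination -h₂ - r * c * ha + r ^ 2 * c ^ 2 * hε₂⟩

end GeodesicSystem

theorem exists_signs_e_param_iff_c_param {s a b c d e : K} (hs : s ≠ 0) :
    (∃ ε₁ ε₂ : K, (ε₁ = 1 ∨ ε₁ = -1) ∧ (ε₂ = 1 ∨ ε₂ = -1) ∧
      a = ε₁ * ε₂ * ((1 - s ^ 2) / s) * e ∧ b = ε₁ * e ∧ c = -(ε₁ * ε₂ / s) * e ∧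
      d = ε₂ * s * e) ↔
    ∃ ε η : K, (ε = 1 ∨ ε = -1) ∧ (η = 1 ∨ η = -1) ∧
      a = (s ^ 2 - 1) * c ∧ b = -(ε * e) ∧ d = ε * (s ^ 2 * c) ∧ e = η * (s * c) := by
  constructor
  · rintro ⟨ε₁, ε₂, hε₁, hε₂, rfl, rfl, rfl, rfl⟩
    rw [← sq_eq_one_iff] at hε₁ hε₂
    refine ⟨-ε₁, -(ε₁ * ε₂), sq_eq_one_iff.mp ?_, sq_eq_one_iff.mp ?_, ?_, ?_, ?_, ?_⟩
    · linear_combination hε₁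
    · linear_combination ε₂ ^ 2 * hε₁ + hε₂
    · field_simp
      ring
    · ring
    · field_simp
      linear_combination -(ε₂ * e) * hε₁
    · field_simp
      linear_combination -(e * ε₂ ^ 2) * hε₁ - e * hε₂
  · rintro ⟨ε, η, hε, hη, rfl, rfl, rfl, rfl⟩
    rw [← sq_eq_one_iff] at hε hη
    refine ⟨-ε, ε * η, sq_eq_one_iff.mp ?_, sq_eq_one_iff.mp ?_, ?_, ?_, ?_, ?_⟩
    · linear_combination hε
    · linear_combination η ^ 2 * hε + hη
    · field_simp
      linear_combination (1 - s ^ 2) * c * η ^ 2 * hε + (1 - s ^ 2) * c * hη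
    · ring
    · field_simp
      linear_combination -(c * η ^ 2) * hε - c * hη
    · linear_combination -(ε * s ^ 2 * c) * hη

theorem geodesicSystem_iff {r s : K} (hs : s ≠ 0) (hsr : s ^ 2 = r) (a b c d e : K) :
    GeodesicSystem r a b c d e ↔
      ((a = 0 ∧ b = 0 ∧ d = 0 ∧ e = 0) ∨
       (c = 0 ∧ d = 0 ∧ e = 0) ∨
       (a = r * c ∧ b = 0 ∧ (d = r * c ∨ d = -(r * c)) ∧ e = 0) ∨
       (b = 0 ∧ c = -a ∧ d = 0 ∧ ∃ ε : K, (ε = 1 ∨ ε = -1) ∧ e = ε * s * a) ∨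
       (∃ ε₁ ε₂ : K, (ε₁ = 1 ∨ ε₁ = -1) ∧ (ε₂ = 1 ∨ ε₂ = -1) ∧
         a = ε₁ * ε₂ * ((1 - r) / s) * e ∧ b = ε₁ * e ∧ c = -(ε₁ * ε₂ / s) * e ∧
         d = ε₂ * s * e)) := by
  subst hsr
  rw [exists_signs_e_param_iff_c_param hs]
  have hr : s ^ 2 ≠ 0 := pow_ne_zero 2 hs
  refine ⟨fun h ↦ ?_, ?_⟩
  · rcases eq_or_ne d 0 with rfl | hd <;> rcases eq_or_ne e 0 with rfl | he
    · rcases h.of_d_eq_zero_of_e_eq_zero hr with ⟨rfl, rfl⟩ | rfl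
      · exact Or.inl ⟨rfl, rfl, rfl, rfl⟩
      · exact Or.inr <| Or.inl ⟨rfl, rfl, rfl⟩
    · obtain ⟨rfl, rfl, he_sq⟩ := h.of_d_eq_zero he
      obtain ⟨ε, hε, rfl⟩ := exists_sign_mul_of_sq_eq_sq (he_sq.trans (mul_pow s a 2).symm)
      exact Or.inr <| Or.inr <| Or.inr <| Or.inl ⟨rfl, rfl, rfl, ε, hε, (mul_assoc ε s a).symm⟩
    · obtain ⟨rfl, rfl, hd⟩ := h.of_e_eq_zero hd
      exact Or.inr <| Or.inr <| Or.inl ⟨rfl, rfl, hd, rfl⟩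
    · obtain ⟨ε, hε, ha, hb, hd, he_sq⟩ := h.of_d_ne_zero_of_e_ne_zero hr hd he
      obtain ⟨η, hη, he⟩ := exists_sign_mul_of_sq_eq_sq (he_sq.trans (mul_pow s c 2).symm)
      exact Or.inr <| Or.inr <| Or.inr <| Or.inr ⟨ε, η, hε, hη, ha, hb, hd, he⟩
  · rintro (⟨rfl, rfl, rfl, rfl⟩ | ⟨rfl, rfl, rfl⟩ | ⟨rfl, rfl, rfl | rfl, rfl⟩ |
      ⟨rfl, rfl, rfl, ε, rfl | rfl, rfl⟩ | ⟨ε, η, rfl | rfl, rfl | rfl, rfl, rfl, rfl, rfl⟩) <;>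
    exact ⟨by ring, by ring, by ring, by ring⟩

end SiegelJacobi

/-- Classification of the solutions of the algebraic system arising from the
geodesic lemma on the Siegel–Jacobi upper half-plane with the balanced metric
(`r = √(α/β) > 0`): `(a,b,c,d,e) ∈ ℝ⁵` satisfies
`rbc + de = 0`, `−rac + d² − e² = 0`, `bd + e(a+c) = 0`, `rcd + be − ad = 0`
if and only if it is of one of the five listed forms; these are exactly the
components of the geodesic vectors `X = aL¹+bL²+cL³+dL⁴+eL⁵+fL⁶` (with `f`
arbitrary). -/
theorem geodesic_vectors_classification (r : ℝ) (hr : 0 < r) (a b c d e : ℝ) :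
    (r * b * c + d * e = 0 ∧
     -(r * a * c) + d ^ 2 - e ^ 2 = 0 ∧
     b * d + e * (a + c) = 0 ∧
     r * c * d + b * e - a * d = 0) ↔
    ((a = 0 ∧ b = 0 ∧ d = 0 ∧ e = 0) ∨
     (c = 0 ∧ d = 0 ∧ e = 0) ∨
     (a = r * c ∧ b = 0 ∧ (d = r * c ∨ d = -(r * c)) ∧ e = 0) ∨
     (b = 0 ∧ c = -a ∧ d = 0 ∧
       ∃ ε : ℝ, (ε = 1 ∨ ε = -1) ∧ e = ε * Real.sqrt r * a) ∨
     (∃ ε₁ ε₂ : ℝ, (ε₁ = 1 ∨ ε₁ = -1) ∧ (ε₂ = 1 ∨ ε₂ = -1) ∧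
       a = ε₁ * ε₂ * ((1 - r) / Real.sqrt r) * e ∧
       b = ε₁ * e ∧
       c = -(ε₁ * ε₂ / Real.sqrt r) * e ∧
       d = ε₂ * Real.sqrt r * e)) :=
  SiegelJacobi.geodesicSystem_iff (Real.sqrt_pos.2 hr).ne' (Real.sq_sqrt hr.le) a b c d e
end
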